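/- Let $X_s \subset \mathbb{P}^6$ be the complete intersection defined by $\sum_{i=0}^4 s_i x_i^4 + y^4 + z^4 = 0$ and $\sum_{i=0}^4 x_i^4 = 0$ with the $s_i \in \mathbb{C}$ pairwise distinct and nonzero. Then the singular locus of $X_s$ is contained in the set $\{x_0 = \cdots = x_4 = 0\} \cap X_s$, which is finite. -/
import Mathlib


open Finset

/-- For the complete intersection `X_s ⊂ ℙ⁶` given by
`∑ sᵢ xᵢ⁴ + y⁴ + z⁴ = 0`, `∑ xᵢ⁴ = 0` with the `sᵢ` pairwise distinct and nonzero,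
any singular point (i.e. a point of `X_s`, in homogeneous coordinates `(x,y,z) ≠ 0`, where
the two rows of the Jacobian are linearly dependent) lies in `{x₀ = ⋯ = x₄ = 0}`, has
`y ≠ 0`, and satisfies `(z/y)⁴ = -1`; so the singular locus consists of the four points
`[0:0:0:0:0:1:σ]`, `σ⁴ = -1`. -/
theorem stmt11 (s : Fin 5 → ℂ) (hdist : Function.Injective s) (hne : ∀ i, s i ≠ 0)
    (x : Fin 5 → ℂ) (y z : ℂ) (hnz : ¬(x = 0 ∧ y = 0 ∧ z = 0))
    (hF1 : ∑ i, s i * x i ^ 4 + y ^ 4 + z ^ 4 = 0)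
    (hF2 : ∑ i, x i ^ 4 = 0)
    (a b : ℂ) (hab : ¬(a = 0 ∧ b = 0))
    (hrow1 : ∀ i, a * (4 * s i * x i ^ 3) + b * (4 * x i ^ 3) = 0)
    (hrowy : a * (4 * y ^ 3) = 0) (hrowz : a * (4 * z ^ 3) = 0) :
    (∀ i, x i = 0) ∧ y ≠ 0 ∧ (z / y) ^ 4 = -1 := by
  by_cases ha : a = 0
  · -- then b ≠ 0, so all x i = 0
    have hb : b ≠ 0 := fun hb => hab ⟨ha, hb⟩
    have hx : ∀ i, x i = 0 := by
      intro i
      have := hrow1 i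
      rw [ha] at this
      have hx3 : x i ^ 3 = 0 := by
        have hb4 : (4:ℂ) * b ≠ 0 := by simp [hb]
        have : (4 * b) * x i ^ 3 = 0 := by linear_combination this
        exact (mul_eq_zero.mp this).resolve_left hb4
      exact pow_eq_zero_iff (by norm_num) |>.mp hx3
    have hsum : ∑ i, s i * x i ^ 4 = 0 := by
      apply Finset.sum_eq_zero; intro i _; rw [hx i]; ring
    rw [hsum, zero_add] at hF1
    have hy : y ≠ 0 := by
      intro hy
      rw [hy] at hF1
      have hz4 : z ^ 4 = 0 := by linear_combination hF1
      have hz : z = 0 := pow_eq_zero_iff (by norm_num) |>.mp hz4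
      exact hnz ⟨funext hx, hy, hz⟩
    refine ⟨hx, hy, ?_⟩
    field_simp
    linear_combination hF1
  · -- a ≠ 0 : y = z = 0, and at most one x i nonzero, contradiction
    exfalso
    have hy : y = 0 := by
      have : y ^ 3 = 0 := by
        have h4 : (4:ℂ) * a ≠ 0 := by simp [ha]
        have h : (4 * a) * y ^ 3 = 0 := by linear_combination hrowy
        exact (mul_eq_zero.mp h).resolve_left h4
      exact pow_eq_zero_iff (by norm_num) |>.mp this
    have hz : z = 0 := by
      have : z ^ 3 = 0 := by
        have h4 : (4:ℂ) * a ≠ 0 := by simp [ha]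
        have h : (4 * a) * z ^ 3 = 0 := by linear_combination hrowz
        exact (mul_eq_zero.mp h).resolve_left h4
      exact pow_eq_zero_iff (by norm_num) |>.mp this
    have key : ∀ i, x i ≠ 0 → s i = -b / a := by
      intro i hxi
      have h := hrow1 i
      have hx3 : x i ^ 3 ≠ 0 := pow_ne_zero _ hxi
      have : (a * s i + b) * x i ^ 3 = 0 := by linear_combination h / 4
      have := (mul_eq_zero.mp this).resolve_right hx3
      field_simp
      linear_combination this
    -- at most one i with x i ≠ 0
    have hx : ∀ i, x i = 0 := by
      by_contra h
      push_neg at h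
      obtain ⟨j, hj⟩ := h
      -- all other x k = 0
      have hothers : ∀ k, k ≠ j → x k = 0 := by
        intro k hk
        by_contra hkne
        exact hk (hdist ((key k hkne).trans (key j hj).symm))
      have : ∑ i, x i ^ 4 = x j ^ 4 := by
        rw [Finset.sum_eq_single j]
        · intro k _ hk; rw [hothers k hk]; ring
        · intro h; exact absurd (Finset.mem_univ j) h
      rw [this] at hF2
      exact hj (pow_eq_zero_iff (by norm_num) |>.mp hF2)
    exact hnz ⟨funext hx, hy, hz⟩
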